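/- arXiv:1411.1144 — 3 statements merged into one kernel-verified Lean document; each statement's English description precedes it below -/
import Mathlib

section
/- Let V be a real inner product space with the induced norm ‖·‖, and let ‖·‖_s be a second norm on V such that ‖v‖ ≤ C‖v‖_s for all v ∈ V and some finite constant C > 0. Let f : V → ℝ be a linear functional that is bounded with respect to ‖·‖_s (i.e., |f(v)| ≤ c‖v‖_s for all v ∈ V and some finite c) but unbounded with respect to ‖·‖ (i.e., for every M > 0 there exists v ∈ V with |f(v)| > M‖v‖). Let (V_n)_{n∈ℕ} be a nondecreasing sequence of finite-dimensional subspaces of V whose union is dense in (V, ‖·‖_s). Then sup{|f(v)|/‖v‖ : v ∈ V_n, v ≠ 0} → ∞ as n → ∞; that is, for every M > 0 there exists N such that for every n ≥ N there is v ∈ V_n with v ≠ 0 and |f(v)| ≥ M‖v‖. -/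
/-- Lemma A.1(2): if a linear functional `f` is bounded with respect to a stronger
norm `ns` but unbounded with respect to the inner-product norm `‖·‖` (with
`‖·‖ ≤ C·ns`), and the nondecreasing finite-dimensional subspaces `Vn` have union
dense in `(V, ns)`, then the sieve operator norms
`sup{|f v|/‖v‖ : v ∈ Vn n, v ≠ 0}` diverge to infinity. -/
theorem stmt3 {V : Type*} [NormedAddCommGroup V] [InnerProductSpace ℝ V]
    (ns : V → ℝ)
    (hns_nonneg : ∀ v, 0 ≤ ns v) (hns_eq0 : ∀ v, ns v = 0 → v = 0)
    (hns_add : ∀ v w, ns (v + w) ≤ ns v + ns w)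
    (hns_smul : ∀ (a : ℝ) (v : V), ns (a • v) = |a| * ns v)
    (C : ℝ) (hC : 0 < C) (hnorm_le : ∀ v : V, ‖v‖ ≤ C * ns v)
    (f : V →ₗ[ℝ] ℝ)
    (c : ℝ) (hf_bdd : ∀ v, |f v| ≤ c * ns v)
    (hf_unbdd : ∀ M > (0:ℝ), ∃ v : V, M * ‖v‖ < |f v|)
    (Vn : ℕ → Submodule ℝ V) (hVfd : ∀ n, FiniteDimensional ℝ (Vn n))
    (hVmono : Monotone Vn)
    (hdense : ∀ v : V, ∀ ε > (0:ℝ), ∃ n, ∃ w ∈ Vn n, ns (v - w) < ε) :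
    ∀ M > (0:ℝ), ∃ N : ℕ, ∀ n ≥ N, ∃ v ∈ Vn n, v ≠ 0 ∧ M * ‖v‖ ≤ |f v| := by
  intro M hM
  obtain ⟨v₀, hv₀⟩ := hf_unbdd M hM
  have hfv₀ : 0 < |f v₀| := lt_of_le_of_lt (by positivity) hv₀
  have hns₀ : 0 ≤ ns v₀ := hns_nonneg v₀
  have hc : 0 < c := by nlinarith [hf_bdd v₀]
  have hden : 0 < c + M * C + 1 := by positivity
  set ε := (|f v₀| - M * ‖v₀‖) / (c + M * C + 1) with hεdef
  have hεpos : 0 < ε := div_pos (by linarith) hden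
  have hεeq : ε * (c + M * C + 1) = |f v₀| - M * ‖v₀‖ :=
    div_mul_cancel₀ _ (ne_of_gt hden)
  obtain ⟨N, w, hwN, hw⟩ := hdense v₀ ε hεpos
  refine ⟨N, fun n hn => ⟨w, hVmono hn hwN, ?_⟩⟩
  have hfs : |f v₀ - f w| ≤ c * ε := by
    rw [← map_sub]
    exact le_trans (hf_bdd _) (mul_le_mul_of_nonneg_left hw.le hc.le)
  have hfw : |f v₀| - c * ε ≤ |f w| := by
    have := abs_sub_abs_le_abs_sub (f v₀) (f w)
    linarith
  have hnw : ‖w‖ ≤ ‖v₀‖ + C * ε := by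
    have h1 : ‖w‖ ≤ ‖v₀‖ + ‖v₀ - w‖ := by
      have := norm_sub_norm_le w v₀
      have h2 : ‖w - v₀‖ = ‖v₀ - w‖ := norm_sub_rev _ _
      linarith
    have h3 : ‖v₀ - w‖ ≤ C * ε :=
      le_trans (hnorm_le _) (mul_le_mul_of_nonneg_left hw.le hC.le)
    linarith
  have hnv₀ : 0 ≤ ‖v₀‖ := norm_nonneg _
  constructor
  · intro hw0
    rw [hw0, map_zero, sub_zero] at hfs
    nlinarith [mul_nonneg hM.le hnv₀, mul_pos (mul_pos hM hC) hεpos]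
  · nlinarith [mul_nonneg hM.le hnv₀, mul_pos (mul_pos hM hC) hεpos]
end

section
/- Let H be a real inner product space, let φ : H → ℝ, let α₀, α ∈ H, let v* ∈ H with v* ≠ 0, let s > 0, and set u* := v*/s. Let τ > 0, F > 0 and r ∈ ℝ, and put a := ⟨v*, α − α₀⟩ and b := ‖v*‖²/s (so b > 0). Assume: (a) the map t ↦ φ(α + t·u*) is continuous on [−τ, τ]; (b) |φ(α + t·u*) − φ(α₀) − a − t·b| ≤ F for all t ∈ [−τ, τ]; (c) (|r − a| + 2F)/b ≤ τ. Then there exists t ∈ ℝ with |t| ≤ (|r − a| + 2F)/b (hence |t| ≤ τ) such that φ(α + t·u*) = φ(α₀) + r. -/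
/-! A function that stays within `F` of the line `t ↦ a + t b` overshoots the level `r` at
`t = T` and undershoots it at `t = -T` once `T b ≥ |r - a| + F`, so the intermediate value
theorem produces a solution of `g t = r` in `[-T, T]`. -/

theorem exists_mem_Icc_eq_of_abs_sub_affine_le {g : ℝ → ℝ} {a b F r T : ℝ} (hT : 0 ≤ T)
    (hTb : |r - a| + F ≤ T * b) (hg : ContinuousOn g (Set.Icc (-T) T))
    (hbound : ∀ t ∈ Set.Icc (-T) T, |g t - a - t * b| ≤ F) :
    ∃ t ∈ Set.Icc (-T) T, g t = r := by
  have hT_mem : T ∈ Set.Icc (-T) T := ⟨by linarith, le_rfl⟩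
  have hnegT_mem : -T ∈ Set.Icc (-T) T := ⟨le_rfl, by linarith⟩
  have hupper := (abs_le.1 (hbound T hT_mem)).1
  have hlower := (abs_le.1 (hbound (-T) hnegT_mem)).2
  have hra := abs_le.1 (le_refl |r - a|)
  have hr : r ∈ Set.Icc (g (-T)) (g T) := ⟨by linarith, by linarith⟩
  exact intermediate_value_Icc (by linarith) hg hr

theorem stmt6_general {H : Type*} [NormedAddCommGroup H] [InnerProductSpace ℝ H]
    (φ : H → ℝ) (α₀ α vstar : H) (hv : vstar ≠ 0) (s : ℝ) (hs : 0 < s)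
    (ustar : H)
    (τ F r : ℝ) (hF : 0 < F)
    (a b : ℝ) (hb : b = ‖vstar‖ ^ 2 / s)
    (hcont : ContinuousOn (fun t : ℝ => φ (α + t • ustar)) (Set.Icc (-τ) τ))
    (hbound : ∀ t ∈ Set.Icc (-τ) τ, |φ (α + t • ustar) - φ α₀ - a - t * b| ≤ F)
    (hstep : (|r - a| + 2 * F) / b ≤ τ) :
    ∃ t : ℝ, |t| ≤ (|r - a| + 2 * F) / b ∧ φ (α + t • ustar) = φ α₀ + r := by
  have hb_pos : 0 < b := hb ▸ div_pos (pow_pos (norm_pos_iff.2 hv) 2) hs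
  set T := (|r - a| + 2 * F) / b
  have hT : 0 ≤ T := by positivity
  have hTb : T * b = |r - a| + 2 * F := div_mul_cancel₀ _ hb_pos.ne'
  have hsub : Set.Icc (-T) T ⊆ Set.Icc (-τ) τ := Set.Icc_subset_Icc (by linarith) hstep
  obtain ⟨t, ht, hφt⟩ := exists_mem_Icc_eq_of_abs_sub_affine_le
    (g := fun t => φ (α + t • ustar) - φ α₀) (r := r) hT (by linarith) ((hcont.mono hsub).sub continuousOn_const)
    fun t ht => hbound t (hsub ht)
  exact ⟨t, abs_le.2 ht, by linarith⟩

/-- Lemma B.2 (fixed-n analytic content): solving `φ(α + t·u*) = φ(α₀) + r` along the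
scaled Riesz representer direction `u* = v*/s`, given a uniform linearization error
bound `F` on `[−τ, τ]` and the step-size compatibility condition `(|r−a|+2F)/b ≤ τ`,
where `a = ⟨v*, α−α₀⟩` and `b = ‖v*‖²/s`. -/
theorem stmt6 {H : Type*} [NormedAddCommGroup H] [InnerProductSpace ℝ H]
    (φ : H → ℝ) (α₀ α vstar : H) (hv : vstar ≠ 0) (s : ℝ) (hs : 0 < s)
    (ustar : H) (hu : ustar = s⁻¹ • vstar)
    (τ F r : ℝ) (hτ : 0 < τ) (hF : 0 < F)
    (a b : ℝ) (ha : a = (inner ℝ vstar (α - α₀) : ℝ)) (hb : b = ‖vstar‖ ^ 2 / s)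
    (hcont : ContinuousOn (fun t : ℝ => φ (α + t • ustar)) (Set.Icc (-τ) τ))
    (hbound : ∀ t ∈ Set.Icc (-τ) τ, |φ (α + t • ustar) - φ α₀ - a - t * b| ≤ F)
    (hstep : (|r - a| + 2 * F) / b ≤ τ) :
    ∃ t : ℝ, |t| ≤ (|r - a| + 2 * F) / b ∧ φ (α + t • ustar) = φ α₀ + r :=
  stmt6_general φ α₀ α vstar hv s hs ustar τ F r hF a b hb hcont hbound hstep
end

section
/- Let a > 0 and let (μ_j)_{j≥2} and (b_j)_{j≥2} be real sequences satisfying c₁ exp(−a j/2) ≤ μ_j ≤ c₂ exp(−a j/2) and c₃ (j·ln j)⁻¹ ≤ b_j² ≤ c₄ (j·ln j)⁻¹ for all integers j ≥ 2, where 0 < c₁ ≤ c₂ < ∞ and 0 < c₃ ≤ c₄ < ∞. Then there exist constants 0 < c ≤ c′ < ∞ such that for all integers k ≥ 2: c · exp(a k)/(k·ln k) ≤ Σ_{j=2}^{k} μ_j⁻² b_j² ≤ c′ · exp(a k)/ln k. -/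
-- (j-1)*log j ≥ log 2 style bound: if k ≤ 2j, 2 ≤ j then log k ≤ j log j
lemma aux_jlogj {j k : ℕ} (hj : 2 ≤ j) (h : k ≤ 2 * j) :
    Real.log k ≤ (j : ℝ) * Real.log j := by
  have hj2 : (2:ℝ) ≤ j := by exact_mod_cast hj
  have hlj : Real.log 2 ≤ Real.log j := Real.log_le_log (by norm_num) hj2
  have hljpos : 0 < Real.log j := lt_of_lt_of_le (Real.log_pos (by norm_num)) hlj
  have h1 : Real.log k ≤ Real.log (2 * j) := by
    rcases Nat.eq_zero_or_pos k with hk | hk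
    · simp [hk]
      exact Real.log_nonneg (by push_cast; nlinarith [hj2])
    · apply Real.log_le_log (by positivity)
      exact_mod_cast h
  have h2 : Real.log ((2:ℝ) * j) = Real.log 2 + Real.log j := by
    rw [Real.log_mul (by norm_num) (by positivity)]
  have : Real.log 2 + Real.log j ≤ (j:ℝ) * Real.log j := by
    nlinarith [hljpos, hlj]
  calc Real.log k ≤ Real.log ((2:ℝ) * j) := by exact_mod_cast h1
    _ ≤ (j:ℝ) * Real.log j := by rw [h2]; exact this

lemma aux_cube {x : ℝ} (hx : 0 ≤ x) : x ^ 3 / 27 ≤ Real.exp x := by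
  have h1 : 1 + x / 3 ≤ Real.exp (x / 3) := by linarith [Real.add_one_le_exp (x/3)]
  have h2 : (x / 3) ^ 3 ≤ (1 + x / 3) ^ 3 := by
    apply pow_le_pow_left₀ (by positivity); linarith
  have h3 : (1 + x / 3) ^ 3 ≤ Real.exp (x / 3) ^ 3 := by
    apply pow_le_pow_left₀ (by positivity) h1
  have h4 : Real.exp (x / 3) ^ 3 = Real.exp x := by
    rw [← Real.exp_nat_mul]; norm_num; ring
  nlinarith [h2, h3, h4]

lemma aux_geom (a : ℝ) (ha : 0 < a) (k : ℕ) :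
    ∑ j ∈ Finset.Icc 2 k, Real.exp (a * j)
      ≤ Real.exp (a * k) * (Real.exp a / (Real.exp a - 1)) := by
  have hea : 1 < Real.exp a := by
    rw [← Real.exp_zero]; exact Real.exp_lt_exp.2 ha
  have h1 : ∑ j ∈ Finset.Icc 2 k, Real.exp (a * j)
      ≤ ∑ j ∈ Finset.range (k+1), Real.exp (a * j) := by
    apply Finset.sum_le_sum_of_subset_of_nonneg
    · intro x hx; simp only [Finset.mem_Icc] at hx; simp; omega
    · intro i _ _; positivity
  have h2 : ∀ j : ℕ, Real.exp (a * j) = (Real.exp a) ^ j := by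
    intro j; rw [← Real.exp_nat_mul]; ring_nf
  calc ∑ j ∈ Finset.Icc 2 k, Real.exp (a * j)
      ≤ ∑ j ∈ Finset.range (k+1), Real.exp (a * j) := h1
    _ = ∑ j ∈ Finset.range (k+1), (Real.exp a) ^ j := by
        apply Finset.sum_congr rfl; intro j _; exact h2 j
    _ = ((Real.exp a) ^ (k+1) - 1) / (Real.exp a - 1) := by
        rw [geom_sum_eq (ne_of_gt hea)]
    _ ≤ (Real.exp a) ^ (k+1) / (Real.exp a - 1) := by
        apply div_le_div_of_nonneg_right ?_ (by linarith)
        · linarith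
    _ = Real.exp (a * k) * (Real.exp a / (Real.exp a - 1)) := by
        rw [pow_succ, ← h2 k]; ring

lemma aux_split (a : ℝ) (ha : 0 < a) {j k : ℕ} (hj : 2 ≤ j) (hjk : j ≤ k) (hk : 2 ≤ k) :
    Real.exp (a * j) * ((j : ℝ) * Real.log j)⁻¹
      ≤ Real.exp (a * j) / Real.log k + Real.exp (a * k / 2) / (2 * Real.log 2) := by
  have hk2 : (2:ℝ) ≤ k := by exact_mod_cast hk
  have hj2 : (2:ℝ) ≤ j := by exact_mod_cast hj
  have hLk : 0 < Real.log k := Real.log_pos (by linarith)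
  have hL2 : 0 < Real.log 2 := Real.log_pos (by norm_num)
  have hLj : Real.log 2 ≤ Real.log j := Real.log_le_log (by norm_num) hj2
  have hjlj : (0:ℝ) < (j:ℝ) * Real.log j := by nlinarith
  by_cases hc : k ≤ 2 * j
  · have h := aux_jlogj hj hc
    have t1 : Real.exp (a * j) * ((j : ℝ) * Real.log j)⁻¹ ≤ Real.exp (a * j) / Real.log k := by
      rw [div_eq_mul_inv]
      exact mul_le_mul_of_nonneg_left (inv_anti₀ hLk h) (Real.exp_nonneg _)
    have t2 : 0 ≤ Real.exp (a * k / 2) / (2 * Real.log 2) := by positivity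
    linarith
  · push_neg at hc
    have hc' : (2:ℝ) * j ≤ k := by exact_mod_cast Nat.le_of_lt hc
    have t1 : ((j : ℝ) * Real.log j)⁻¹ ≤ (2 * Real.log 2)⁻¹ := by
      apply inv_anti₀ (by positivity)
      have := mul_le_mul hj2 hLj (le_of_lt hL2) (by linarith)
      linarith
    have t2 : Real.exp (a * j) ≤ Real.exp (a * k / 2) := by
      apply Real.exp_le_exp.2; nlinarith
    have t3 : Real.exp (a * j) * ((j : ℝ) * Real.log j)⁻¹
        ≤ Real.exp (a * k / 2) * (2 * Real.log 2)⁻¹ :=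
      mul_le_mul t2 t1 (by positivity) (Real.exp_nonneg _)
    have t4 : 0 ≤ Real.exp (a * j) / Real.log k := by positivity
    rw [div_eq_mul_inv (Real.exp (a * k / 2))]
    linarith

/-- Example 2(ii), case (b) of Section 6 (severely ill-posed case): if
`μⱼ ≍ exp(−aj/2)` and `bⱼ² ≍ (j ln j)⁻¹` for `j ≥ 2`, then
`Σ_{j=2}^{k} μⱼ⁻²bⱼ² ∈ [c·exp(ak)/(k ln k), c′·exp(ak)/ln k]` for all `k ≥ 2`. -/
theorem stmt15 (a : ℝ) (ha : 0 < a) (μ b : ℕ → ℝ)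
    (c₁ c₂ c₃ c₄ : ℝ) (hc₁ : 0 < c₁) (hc₁₂ : c₁ ≤ c₂) (hc₃ : 0 < c₃) (hc₃₄ : c₃ ≤ c₄)
    (hμ : ∀ j : ℕ, 2 ≤ j →
      c₁ * Real.exp (-(a * j) / 2) ≤ μ j ∧ μ j ≤ c₂ * Real.exp (-(a * j) / 2))
    (hb : ∀ j : ℕ, 2 ≤ j →
      c₃ * ((j : ℝ) * Real.log j)⁻¹ ≤ (b j) ^ 2 ∧
      (b j) ^ 2 ≤ c₄ * ((j : ℝ) * Real.log j)⁻¹) :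
    ∃ c c' : ℝ, 0 < c ∧ c ≤ c' ∧ ∀ k : ℕ, 2 ≤ k →
      c * Real.exp (a * k) / ((k : ℝ) * Real.log k)
          ≤ ∑ j ∈ Finset.Icc 2 k, ((μ j)⁻¹) ^ 2 * (b j) ^ 2 ∧
      ∑ j ∈ Finset.Icc 2 k, ((μ j)⁻¹) ^ 2 * (b j) ^ 2
          ≤ c' * Real.exp (a * k) / Real.log k := by
  have hc₂ : 0 < c₂ := lt_of_lt_of_le hc₁ hc₁₂
  have hc₄ : 0 < c₄ := lt_of_lt_of_le hc₃ hc₃₄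
  have hL2 : 0 < Real.log 2 := Real.log_pos (by norm_num)
  have hea : 1 < Real.exp a := by rw [← Real.exp_zero]; exact Real.exp_lt_exp.2 ha
  set G : ℝ := Real.exp a / (Real.exp a - 1) with hG
  have hGpos : 0 < G := by apply div_pos (Real.exp_pos a); linarith
  set M : ℝ := c₄ / c₁ ^ 2 with hM
  have hMpos : 0 < M := by positivity
  set c' : ℝ := M * (G + 54 / (a ^ 3 * Real.log 2)) with hc'
  have hc'pos : 0 < c' := by positivity
  refine ⟨min (c₃ / c₂ ^ 2) c', c', lt_min (by positivity) hc'pos, min_le_right _ _, ?_⟩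
  intro k hk
  have hk2 : (2:ℝ) ≤ k := by exact_mod_cast hk
  have hLk : 0 < Real.log k := Real.log_pos (by linarith)
  have hkpos : (0:ℝ) < k := by linarith
  -- exp square identities
  have hEsq : ∀ j : ℕ, (Real.exp (-(a * j) / 2))⁻¹ ^ 2 = Real.exp (a * j) := by
    intro j
    rw [sq, ← Real.exp_neg, ← Real.exp_add]
    congr 1; ring
  constructor
  · -- lower bound: single term j = k
    have hμk := hμ k hk
    have hbk := hb k hk
    have hμkpos : 0 < μ k := lt_of_lt_of_le (by positivity) hμk.1
    have h1 : (c₂ * Real.exp (-(a * k) / 2))⁻¹ ≤ (μ k)⁻¹ := inv_anti₀ hμkpos hμk.2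
    have h2 : ((c₂ * Real.exp (-(a * k) / 2))⁻¹) ^ 2 ≤ ((μ k)⁻¹) ^ 2 :=
      pow_le_pow_left₀ (by positivity) h1 2
    have h3 : ((c₂ * Real.exp (-(a * k) / 2))⁻¹) ^ 2 = (c₂ ^ 2)⁻¹ * Real.exp (a * k) := by
      rw [mul_inv, mul_pow, hEsq k, inv_pow]
    have hterm : (c₂ ^ 2)⁻¹ * Real.exp (a * k) * (c₃ * ((k : ℝ) * Real.log k)⁻¹)
        ≤ ((μ k)⁻¹) ^ 2 * (b k) ^ 2 := by
      apply mul_le_mul (h3 ▸ h2) hbk.1 (by positivity) (by positivity)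
    have hsingle : ((μ k)⁻¹) ^ 2 * (b k) ^ 2 ≤ ∑ j ∈ Finset.Icc 2 k, ((μ j)⁻¹) ^ 2 * (b j) ^ 2 := by
      apply Finset.single_le_sum (f := fun j => ((μ j)⁻¹) ^ 2 * (b j) ^ 2)
      · intro i _; positivity
      · simp [hk]
    have hle : min (c₃ / c₂ ^ 2) c' * Real.exp (a * k) / ((k : ℝ) * Real.log k)
        ≤ (c₂ ^ 2)⁻¹ * Real.exp (a * k) * (c₃ * ((k : ℝ) * Real.log k)⁻¹) := by
      rw [div_eq_mul_inv]
      have hm : min (c₃ / c₂ ^ 2) c' ≤ c₃ / c₂ ^ 2 := min_le_left _ _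
      have := Real.exp_pos (a * k)
      have hinv : (0:ℝ) < ((k : ℝ) * Real.log k)⁻¹ := by positivity
      calc min (c₃ / c₂ ^ 2) c' * Real.exp (a * k) * ((k : ℝ) * Real.log k)⁻¹
          ≤ (c₃ / c₂ ^ 2) * Real.exp (a * k) * ((k : ℝ) * Real.log k)⁻¹ := by
            apply mul_le_mul_of_nonneg_right (mul_le_mul_of_nonneg_right hm (le_of_lt this)) (le_of_lt hinv)
        _ = (c₂ ^ 2)⁻¹ * Real.exp (a * k) * (c₃ * ((k : ℝ) * Real.log k)⁻¹) := by ring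
    linarith
  · -- upper bound
    set Ck : ℝ := Real.exp (a * k / 2) / (2 * Real.log 2) with hCk
    have hCknn : 0 ≤ Ck := by positivity
    have step1 : ∑ j ∈ Finset.Icc 2 k, ((μ j)⁻¹) ^ 2 * (b j) ^ 2
        ≤ ∑ j ∈ Finset.Icc 2 k, M * (Real.exp (a * j) / Real.log k + Ck) := by
      apply Finset.sum_le_sum
      intro j hjmem
      rw [Finset.mem_Icc] at hjmem
      obtain ⟨hj, hjk⟩ := hjmem
      have hμj := hμ j hj
      have hbj := hb j hj
      have hμjpos : 0 < μ j := lt_of_lt_of_le (by positivity) hμj.1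
      have h1 : (μ j)⁻¹ ≤ (c₁ * Real.exp (-(a * j) / 2))⁻¹ :=
        inv_anti₀ (by positivity) hμj.1
      have h2 : ((μ j)⁻¹) ^ 2 ≤ (c₁ ^ 2)⁻¹ * Real.exp (a * j) := by
        calc ((μ j)⁻¹) ^ 2 ≤ ((c₁ * Real.exp (-(a * j) / 2))⁻¹) ^ 2 :=
              pow_le_pow_left₀ (by positivity) h1 2
          _ = (c₁ ^ 2)⁻¹ * Real.exp (a * j) := by rw [mul_inv, mul_pow, hEsq j, inv_pow]
      have hterm : ((μ j)⁻¹) ^ 2 * (b j) ^ 2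
          ≤ M * (Real.exp (a * j) * ((j : ℝ) * Real.log j)⁻¹) := by
        have := mul_le_mul h2 hbj.2 (by positivity) (by positivity)
        calc ((μ j)⁻¹) ^ 2 * (b j) ^ 2
            ≤ (c₁ ^ 2)⁻¹ * Real.exp (a * j) * (c₄ * ((j : ℝ) * Real.log j)⁻¹) := this
          _ = M * (Real.exp (a * j) * ((j : ℝ) * Real.log j)⁻¹) := by
              rw [hM]; ring
      calc ((μ j)⁻¹) ^ 2 * (b j) ^ 2
          ≤ M * (Real.exp (a * j) * ((j : ℝ) * Real.log j)⁻¹) := hterm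
        _ ≤ M * (Real.exp (a * j) / Real.log k + Ck) :=
            mul_le_mul_of_nonneg_left (aux_split a ha hj hjk hk) (le_of_lt hMpos)
    have step2 : ∑ j ∈ Finset.Icc 2 k, M * (Real.exp (a * j) / Real.log k + Ck)
        = M * ((∑ j ∈ Finset.Icc 2 k, Real.exp (a * j)) / Real.log k + ((k + 1 - 2 : ℕ) : ℝ) * Ck) := by
      rw [← Finset.mul_sum, Finset.sum_add_distrib, ← Finset.sum_div, Finset.sum_const,
        Nat.card_Icc, nsmul_eq_mul]
    have step3 : M * ((∑ j ∈ Finset.Icc 2 k, Real.exp (a * j)) / Real.log k + ((k + 1 - 2 : ℕ) : ℝ) * Ck)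
        ≤ M * (Real.exp (a * k) * G / Real.log k + (k : ℝ) * Ck) := by
      apply mul_le_mul_of_nonneg_left _ (le_of_lt hMpos)
      have hg := aux_geom a ha k
      have hcard : ((k + 1 - 2 : ℕ) : ℝ) ≤ (k : ℝ) := by
        have : k + 1 - 2 ≤ k := by omega
        exact_mod_cast this
      apply add_le_add
      · gcongr
      · exact mul_le_mul_of_nonneg_right hcard hCknn
    -- key: k * Ck ≤ (54 / (a^3 * log 2)) * exp (a k) / log k
    have hkey : (k : ℝ) * Ck ≤ 54 / (a ^ 3 * Real.log 2) * Real.exp (a * k) / Real.log k := by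
      have hcube : a ^ 3 * (k : ℝ) ^ 3 / 216 ≤ Real.exp (a * k / 2) := by
        have h := aux_cube (x := a * k / 2) (by positivity)
        have e : (a * (k:ℝ) / 2) ^ 3 / 27 = a ^ 3 * (k : ℝ) ^ 3 / 216 := by ring
        linarith [e ▸ h]
      have hlogk : Real.log k ≤ (k : ℝ) := by
        linarith [Real.log_le_sub_one_of_pos hkpos]
      have hklk : (k : ℝ) * Real.log k ≤ 108 / a ^ 3 * Real.exp (a * k / 2) := by
        have h1 : (k : ℝ) * Real.log k ≤ (k : ℝ) ^ 3 / 2 := by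
          have p1 : (k : ℝ) * Real.log k ≤ (k : ℝ) * (k : ℝ) :=
            mul_le_mul_of_nonneg_left hlogk hkpos.le
          have p2 : 0 ≤ (k : ℝ) * (k : ℝ) * ((k : ℝ) - 2) :=
            mul_nonneg (mul_nonneg hkpos.le hkpos.le) (by linarith)
          nlinarith [p1, p2]
        have h3 : a ^ 3 * (k : ℝ) ^ 3 ≤ 216 * Real.exp (a * k / 2) := by linarith
        have h2 : (k : ℝ) ^ 3 / 2 ≤ 108 / a ^ 3 * Real.exp (a * k / 2) := by
          rw [div_mul_eq_mul_div, le_div_iff₀ (pow_pos ha 3)]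
          nlinarith
        linarith
      have hEE : Real.exp (a * k / 2) * Real.exp (a * k / 2) = Real.exp (a * k) := by
        rw [← Real.exp_add]; ring_nf
      have hfin : (k : ℝ) * Real.exp (a * k / 2) * Real.log k
          ≤ 54 / (a ^ 3 * Real.log 2) * Real.exp (a * k) * (2 * Real.log 2) := by
        have e1 : 54 / (a ^ 3 * Real.log 2) * Real.exp (a * k) * (2 * Real.log 2)
            = 108 / a ^ 3 * Real.exp (a * k) := by
          field_simp; ring
        rw [e1]
        calc (k : ℝ) * Real.exp (a * k / 2) * Real.log k
            = ((k : ℝ) * Real.log k) * Real.exp (a * k / 2) := by ring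
          _ ≤ (108 / a ^ 3 * Real.exp (a * k / 2)) * Real.exp (a * k / 2) :=
              mul_le_mul_of_nonneg_right hklk (Real.exp_nonneg _)
          _ = 108 / a ^ 3 * Real.exp (a * k) := by rw [mul_assoc, hEE]
      have e2 : (k : ℝ) * Ck = ((k : ℝ) * Real.exp (a * k / 2)) / (2 * Real.log 2) := by
        rw [hCk]; ring
      rw [e2, div_le_div_iff₀ (by positivity) hLk]
      exact hfin
    calc ∑ j ∈ Finset.Icc 2 k, ((μ j)⁻¹) ^ 2 * (b j) ^ 2
        ≤ M * (Real.exp (a * k) * G / Real.log k + (k : ℝ) * Ck) := by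
          rw [← step2] at step3; linarith [step1, step3]
      _ ≤ M * (Real.exp (a * k) * G / Real.log k
            + 54 / (a ^ 3 * Real.log 2) * Real.exp (a * k) / Real.log k) :=
          mul_le_mul_of_nonneg_left (by linarith [hkey]) (le_of_lt hMpos)
      _ = c' * Real.exp (a * k) / Real.log k := by
          rw [hc']; ring
end
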